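/- arXiv:1811.01193 — 2 statements merged into one kernel-verified Lean document; each statement's English description precedes it below -/
import Mathlib

section
/- Let d_0, d_1, w_ψ, w_2 be real numbers with 0 < d_0, 3d_0 < d_1, and 0 < w_ψ < w_2. Then there exist real numbers y, z satisfying d_0·y + w_ψ·z < 1, d_1·y + w_2·z ≥ 3, and d_0·y + w_2·z ≥ 2, if and only if (d_1 − 3d_0)(w_2 − w_ψ) − (d_1·w_ψ − d_0·w_2) > 0. -/
theorem stmt4 (d0 d1 wpsi w2 : ℝ) (hd0 : 0 < d0) (hd1 : 3 * d0 < d1)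
    (hw0 : 0 < wpsi) (hw : wpsi < w2) :
    (∃ y z : ℝ, d0 * y + wpsi * z < 1 ∧ d1 * y + w2 * z ≥ 3 ∧ d0 * y + w2 * z ≥ 2) ↔
      (d1 - 3 * d0) * (w2 - wpsi) - (d1 * wpsi - d0 * w2) > 0 := by
  constructor
  · rintro ⟨y, z, hA, hB, hC⟩
    have hz : 0 < z := by nlinarith
    have hu : 0 < d1 * y + w2 * z - 3 * (d0 * y + wpsi * z) := by linarith
    have hv : 0 < -(d0 * y) + w2 * z - 2 * (wpsi * z) := by linarith
    have hd13 : 0 < d1 - 3 * d0 := by linarith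
    nlinarith [mul_pos hd0 hu, mul_pos hd13 hv, hz]
  · intro hS
    have hdd : 0 < d1 - d0 := by linarith
    have hw2 : 0 < w2 := lt_trans hw0 hw
    have h1 : d1 - d0 ≠ 0 := by positivity
    refine ⟨1 / (d1 - d0), (2 * d1 - 3 * d0) / (w2 * (d1 - d0)), ?_, ?_, ?_⟩
    · rw [mul_one_div, ← mul_div_assoc, div_add_div _ _ h1 (by positivity),
        div_lt_one (by positivity)]
      nlinarith
    · rw [ge_iff_le, mul_one_div, ← mul_div_assoc, div_add_div _ _ h1 (by positivity),
        le_div_iff₀ (by positivity)]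
      nlinarith
    · rw [ge_iff_le, mul_one_div, ← mul_div_assoc, div_add_div _ _ h1 (by positivity),
        le_div_iff₀ (by positivity)]
      nlinarith
end

section
/- Let n ≥ 1, k ≥ 1, and 0 ≤ r < 2n be integers such that 2nk + r ≥ 2n + 2. Then 2·[C(2n−2, r−2)(k+1)² + 2·C(2n−2, r−1)·k(k+1) + C(2n−2, r)·k²] > C(2n−1, r−1)·(k+1)(k+2) + C(2n−1, r)·k(k+1), where C(a,b) denotes the binomial coefficient, zero outside the valid range. -/
/-- Binomial coefficient with integer arguments, zero when `b < 0` or `b > a`. -/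
def C (a b : ℤ) : ℤ := if 0 ≤ b then (a.toNat.choose b.toNat : ℤ) else 0

lemma C_nonneg (a b : ℤ) : 0 ≤ C a b := by
  unfold C; split <;> positivity

lemma C_pos (a b : ℤ) (hb : 0 ≤ b) (hba : b ≤ a) : 1 ≤ C a b := by
  unfold C
  rw [if_pos hb]
  have h : b.toNat ≤ a.toNat := by omega
  exact_mod_cast Nat.choose_pos h

lemma C_pascal (a b : ℤ) (ha : 1 ≤ a) : C a b = C (a - 1) (b - 1) + C (a - 1) b := by
  unfold C
  rcases lt_trichotomy b 0 with h | h | h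
  · rw [if_neg (by omega), if_neg (by omega), if_neg (by omega)]; ring
  · subst h
    rw [if_pos le_rfl, if_neg (by omega), if_pos le_rfl]
    simp
  · rw [if_pos (by omega), if_pos (by omega), if_pos (by omega)]
    have h1 : a.toNat = (a - 1).toNat + 1 := by omega
    have h2 : b.toNat = (b - 1).toNat + 1 := by omega
    rw [h1, h2, Nat.choose_succ_succ]
    push_cast
    ring

theorem stmt8 (n k r : ℤ) (hn : 1 ≤ n) (hk : 1 ≤ k) (hr0 : 0 ≤ r) (hr : r < 2 * n)
    (hg : 2 * n + 2 ≤ 2 * n * k + r) :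
    C (2 * n - 1) (r - 1) * ((k + 1) * (k + 2)) + C (2 * n - 1) r * (k * (k + 1)) <
      2 * (C (2 * n - 2) (r - 2) * (k + 1) ^ 2 +
        2 * C (2 * n - 2) (r - 1) * (k * (k + 1)) + C (2 * n - 2) r * k ^ 2) := by
  have h1 : C (2 * n - 1) (r - 1) = C (2 * n - 2) (r - 2) + C (2 * n - 2) (r - 1) := by
    have := C_pascal (2 * n - 1) (r - 1) (by omega)
    simpa [show 2 * n - 1 - 1 = 2 * n - 2 from by ring,
      show r - 1 - 1 = r - 2 from by ring] using this
  have h2 : C (2 * n - 1) r = C (2 * n - 2) (r - 1) + C (2 * n - 2) r := by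
    have := C_pascal (2 * n - 1) r (by omega)
    simpa [show 2 * n - 1 - 1 = 2 * n - 2 from by ring] using this
  set A := C (2 * n - 2) (r - 2) with hA
  set B := C (2 * n - 2) (r - 1) with hB
  set D := C (2 * n - 2) r with hD
  have hA0 : 0 ≤ A := C_nonneg _ _
  have hB0 : 0 ≤ B := C_nonneg _ _
  have hD0 : 0 ≤ D := C_nonneg _ _
  rw [h1, h2]
  rcases eq_or_lt_of_le hk with hk1 | hk2
  · -- k = 1, hence r ≥ 2 and A ≥ 1
    subst hk1
    have hr2 : 2 ≤ r := by omega
    have hA1 : 1 ≤ A := C_pos _ _ (by omega) (by omega)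
    nlinarith [mul_nonneg hB0 (by nlinarith : (0:ℤ) ≤ 1 * 1 - 1),
      mul_nonneg hD0 (by nlinarith : (0:ℤ) ≤ 1 * 1 - 1)]
  · -- k ≥ 2
    have hk2' : 2 ≤ k := hk2
    rcases le_or_gt r (2 * n - 2) with hrle | hrgt
    · have hD1 : 1 ≤ D := C_pos _ _ hr0 hrle
      nlinarith [mul_nonneg hA0 (by nlinarith : (0:ℤ) ≤ k * (k + 1)),
        mul_nonneg hB0 (by nlinarith : (0:ℤ) ≤ k * k - 1),
        mul_le_mul_of_nonneg_right hD1 (by nlinarith : (0:ℤ) ≤ k * k - k)]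
    · have hreq : r = 2 * n - 1 := by omega
      have hB1 : 1 ≤ B := C_pos _ _ (by omega) (by omega)
      nlinarith [mul_nonneg hA0 (by nlinarith : (0:ℤ) ≤ k * (k + 1)),
        mul_nonneg hD0 (by nlinarith : (0:ℤ) ≤ k * k - k),
        mul_le_mul_of_nonneg_right hB1 (by nlinarith : (0:ℤ) ≤ k * k - 1)]
end
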